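/- Let A, B, C be positive real numbers and let q < 0 < p. Define f(t) = A·t^p + B·t^q − C for t > 0 and M(p,q) = (−q/p)^{p/(p−q)} + (−q/p)^{q/(p−q)}. If A^{−q}·B^{p} < (C/M(p,q))^{p−q}, then f attains a negative minimum on (0,∞) at the point t̄ = (−qB/(pA))^{1/(p−q)}; that is, f(t̄) < 0 and f(t̄) ≤ f(t) for all t > 0. -/

import Mathlib

open Real

/-!
Write `t = s * u` with `s` the critical point. Since `u ^ e = exp (e log u) ≥ 1 + e log u`,
`A t ^ p + B t ^ q ≥ A s ^ p + B s ^ q + (p A s ^ p + q B s ^ q) log u`, and the bracket vanishes at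
the critical point, so `s` is a global minimiser. Its value is `M (A ^ (-q) B ^ p) ^ (1 / (p - q))`,
which the hypothesis makes smaller than `C`.
-/

lemma add_le_mul_rpow_add_mul_rpow {α β p q u : ℝ} (hα : 0 ≤ α) (hβ : 0 ≤ β) (hu : 0 < u)
    (h : p * α + q * β = 0) : α + β ≤ α * u ^ p + β * u ^ q := by
  have hp : log u * p + 1 ≤ u ^ p := rpow_def_of_pos hu p ▸ add_one_le_exp _
  have hq : log u * q + 1 ≤ u ^ q := rpow_def_of_pos hu q ▸ add_one_le_exp _
  have hsum : α * (log u * p) + β * (log u * q) = 0 := by linear_combination log u * h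
  linarith [mul_le_mul_of_nonneg_left hp hα, mul_le_mul_of_nonneg_left hq hβ]

lemma mul_rpow_add_mul_rpow_le_of_critical {A B p q s t : ℝ} (hA : 0 ≤ A) (hB : 0 ≤ B)
    (hs : 0 < s) (ht : 0 < t) (hcrit : p * (A * s ^ p) + q * (B * s ^ q) = 0) :
    A * s ^ p + B * s ^ q ≤ A * t ^ p + B * t ^ q := by
  have hu : 0 < t / s := div_pos ht hs
  have ht' : t = s * (t / s) := by field_simp
  have key := add_le_mul_rpow_add_mul_rpow (by positivity) (by positivity) hu hcrit
  rw [ht', mul_rpow hs.le hu.le, mul_rpow hs.le hu.le]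
  linarith

section CriticalPoint

variable {A B p q s : ℝ}

lemma critical_point_of_rpow_sub_eq (hs : 0 < s) (hA : 0 < A) (hp : 0 < p)
    (hsD : s ^ (p - q) = -q * B / (p * A)) : p * (A * s ^ p) + q * (B * s ^ q) = 0 := by
  have hsp : s ^ p = s ^ (p - q) * s ^ q := by rw [← rpow_add hs, sub_add_cancel]
  rw [hsp, hsD]
  field_simp
  ring

lemma critical_value_eq (hs : 0 < s) (hA : 0 < A) (hB : 0 < B) (hq : q < 0) (hp : 0 < p)
    (hsD : s ^ (p - q) = -q * B / (p * A)) :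
    A * s ^ p + B * s ^ q = ((-q / p) ^ (p / (p - q)) + (-q / p) ^ (q / (p - q))) *
      (A ^ (-q) * B ^ p) ^ (1 / (p - q)) := by
  have hD : p - q ≠ 0 := by linarith
  have hr : 0 < -q / p := div_pos (neg_pos.2 hq) hp
  have hs_rpow (e : ℝ) :
      s ^ e = (-q / p) ^ (e / (p - q)) * B ^ (e / (p - q)) / A ^ (e / (p - q)) := by
    rw [show s ^ e = (s ^ (p - q)) ^ (e / (p - q)) by rw [← rpow_mul hs.le]; field_simp, hsD,
      show -q * B / (p * A) = -q / p * B / A by ring, div_rpow (by positivity) hA.le,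
      mul_rpow hr.le hB.le]
  have hK : (A ^ (-q) * B ^ p) ^ (1 / (p - q)) = (A ^ (q / (p - q)))⁻¹ * B ^ (p / (p - q)) := by
    rw [mul_rpow (by positivity) (by positivity), ← rpow_mul hA.le, ← rpow_mul hB.le,
      ← rpow_neg hA.le]
    ring_nf
  have hpD : p / (p - q) = 1 + q / (p - q) := by field_simp; ring
  rw [hs_rpow, hs_rpow, hK, hpD, rpow_add hA, rpow_add hB, rpow_one, rpow_one]
  field_simp

end CriticalPoint

theorem stmt_0 (A B C p q : ℝ) (hA : 0 < A) (hB : 0 < B) (hC : 0 < C)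
    (hq : q < 0) (hp : 0 < p)
    (f : ℝ → ℝ) (hf : ∀ t : ℝ, 0 < t → f t = A * t ^ p + B * t ^ q - C)
    (M : ℝ) (hM : M = (-q / p) ^ (p / (p - q)) + (-q / p) ^ (q / (p - q)))
    (hcond : A ^ (-q) * B ^ p < (C / M) ^ (p - q))
    (tbar : ℝ) (htbar : tbar = (-q * B / (p * A)) ^ (1 / (p - q))) :
    f tbar < 0 ∧ ∀ t : ℝ, 0 < t → f tbar ≤ f t := by
  have hD : 0 < p - q := by linarith
  have hq' : 0 < -q := neg_pos.2 hq
  have htbar_pos : 0 < tbar := by rw [htbar]; positivity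
  have htbar_rpow : tbar ^ (p - q) = -q * B / (p * A) := by
    rw [htbar, one_div, rpow_inv_rpow (by positivity) hD.ne']
  have hM_pos : 0 < M := by rw [hM]; positivity
  have hK : (A ^ (-q) * B ^ p) ^ (1 / (p - q)) < C / M := by
    rwa [← rpow_lt_rpow_iff (by positivity) (by positivity) hD, one_div,
      rpow_inv_rpow (by positivity) hD.ne']
  have hvalue : A * tbar ^ p + B * tbar ^ q < C := by
    rw [critical_value_eq htbar_pos hA hB hq hp htbar_rpow, ← hM]
    calc M * (A ^ (-q) * B ^ p) ^ (1 / (p - q)) < M * (C / M) := by gcongr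
      _ = C := mul_div_cancel₀ C hM_pos.ne'
  have hmin (t : ℝ) (ht : 0 < t) : A * tbar ^ p + B * tbar ^ q ≤ A * t ^ p + B * t ^ q :=
    mul_rpow_add_mul_rpow_le_of_critical hA.le hB.le htbar_pos ht
      (critical_point_of_rpow_sub_eq htbar_pos hA hp htbar_rpow)
  refine ⟨by rw [hf tbar htbar_pos]; linarith, fun t ht => ?_⟩
  rw [hf tbar htbar_pos, hf t ht]
  linarith [hmin t ht]
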